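/- arXiv:2012.07399 — 2 statements merged into one kernel-verified Lean document; each statement's English description precedes it below -/
import Mathlib

section
/- Let ρ₁ and ρ₂ be non-atomic Borel probability measures on [0,∞) with finite first moments and let W : [0,1] → [0,∞) be bounded and continuous. Then for every t ∈ (0,1), the function t ↦ Φ_W((1−t)ρ₁ + t ρ₂) is differentiable and d/dt Φ_W((1−t)ρ₁ + t ρ₂) = ∫_0^∞ W( F_{(1−t)ρ₁ + t ρ₂}(r) ) ( F_{ρ₁}(r) − F_{ρ₂}(r) ) dr. -/
open MeasureTheory Set

/-- The cumulative distribution function `F_ρ(r) = ρ([0,r])`. -/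
noncomputable def cdf (ρ : Measure ℝ) (r : ℝ) : ℝ := (ρ (Iic r)).toReal

/-- The robust functional `Φ_W(ρ) = ∫ r W(F_ρ(r)) dρ(r)`. -/
noncomputable def PhiW (W : ℝ → ℝ) (ρ : Measure ℝ) : ℝ := ∫ r, r * W (cdf ρ r) ∂ρ

/-- The mixture `(1 - t) ρ₁ + t ρ₂`. -/
noncomputable def mix (ρ₁ ρ₂ : Measure ℝ) (t : ℝ) : Measure ℝ :=
  ENNReal.ofReal (1 - t) • ρ₁ + ENNReal.ofReal t • ρ₂


/-!
The pushforward of a non-atomic law `ρ` under its cdf `F` is the uniform law on `[0,1]`, so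
writing `r = ∫₀^∞ 1_{y<r} dy` and using Fubini gives `Φ_W(ρ) = ∫₀^∞ ∫_{F(y)}^1 W(u) du dy`.
For the mixture, `F = (1-t)F₁ + tF₂` is affine in `t`, and the `t`-derivative
`W(F(y)) (F₁(y) - F₂(y))` of the inner integral is dominated by
`sup |W| · |(1 - F₂(y)) - (1 - F₁(y))|`, which is integrable because the first moments are
finite; so one may differentiate under the outer integral.
-/

open Filter Topology

lemma cdf_nonneg (μ : Measure ℝ) (x : ℝ) : 0 ≤ cdf μ x := ENNReal.toReal_nonneg

section CDF

variable (μ : Measure ℝ) [IsProbabilityMeasure μ]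

lemma cdf_eq_probabilityCdf : cdf μ = ProbabilityTheory.cdf μ :=
  funext fun x => (ProbabilityTheory.cdf_eq_real μ x).symm

lemma cdf_le_one (x : ℝ) : cdf μ x ≤ 1 := by
  rw [cdf_eq_probabilityCdf]; exact ProbabilityTheory.cdf_le_one μ x

lemma monotone_cdf : Monotone (cdf μ) := by
  rw [cdf_eq_probabilityCdf]; exact ProbabilityTheory.monotone_cdf μ

lemma ofReal_cdf (x : ℝ) : ENNReal.ofReal (cdf μ x) = μ (Iic x) := by
  rw [cdf_eq_probabilityCdf]; exact ProbabilityTheory.ofReal_cdf μ x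

variable [NullSingletonClass μ]

lemma continuous_cdf : Continuous (cdf μ) := by
  rw [cdf_eq_probabilityCdf]
  set F := ProbabilityTheory.cdf μ
  refine continuous_iff_continuousAt.2 fun x =>
    continuousAt_iff_continuous_left_right.2 ⟨?_, F.right_continuous x⟩
  rw [← continuousWithinAt_Iio_iff_Iic, F.mono.continuousWithinAt_Iio_iff_leftLim_eq]
  have hjump := F.measure_singleton x
  rw [ProbabilityTheory.measure_cdf, measure_singleton, eq_comm, ENNReal.ofReal_eq_zero,
    sub_nonpos] at hjump
  exact le_antisymm (F.mono.leftLim_le le_rfl) hjump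

lemma measure_cdf_preimage_Iic {b : ℝ} (hb : b ∈ Icc 0 1) :
    μ (cdf μ ⁻¹' Iic b) = ENNReal.ofReal b := by
  set S := cdf μ ⁻¹' Iic b
  obtain rfl | hb1 := hb.2.eq_or_lt
  · rw [show S = univ from eq_univ_of_forall (cdf_le_one μ)]
    simp
  obtain hS | ⟨x₀, hx₀⟩ := S.eq_empty_or_nonempty
  · have hb0 : b ≤ 0 := by
      refine ge_of_tendsto (cdf_eq_probabilityCdf μ ▸ ProbabilityTheory.tendsto_cdf_atBot μ)
        (Eventually.of_forall fun x => ?_)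
      exact (not_le.1 (eq_empty_iff_forall_notMem.1 hS x)).le
    simp [hS, le_antisymm hb0 hb.1]
  obtain ⟨M, hM⟩ : ∃ M, b < cdf μ M :=
    ((cdf_eq_probabilityCdf μ ▸ ProbabilityTheory.tendsto_cdf_atTop μ).eventually
      (eventually_gt_nhds hb1)).exists
  have hbdd : BddAbove S := ⟨M, fun x hx =>
    le_of_not_gt fun h => (hM.trans_le (monotone_cdf μ h.le)).not_ge hx⟩
  have hc : sSup S ∈ S := (isClosed_Iic.preimage (continuous_cdf μ)).csSup_mem ⟨x₀, hx₀⟩ hbdd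
  have hSc : S = Iic (sSup S) := Subset.antisymm (fun x hx => le_csSup hbdd hx)
    fun x hx => (monotone_cdf μ hx).trans hc
  obtain ⟨x, hx⟩ := mem_range_of_exists_le_of_exists_ge (continuous_cdf μ) ⟨x₀, hx₀⟩ ⟨M, hM.le⟩
  have hcb : cdf μ (sSup S) = b :=
    le_antisymm hc (hx ▸ monotone_cdf μ (le_csSup hbdd (show x ∈ S from hx.le)))
  rw [hSc, ← ofReal_cdf, hcb]

lemma map_cdf : μ.map (cdf μ) = volume.restrict (Icc 0 1) := by
  refine Measure.ext_of_Iic _ _ fun b => ?_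
  rw [Measure.map_apply (continuous_cdf μ).measurable measurableSet_Iic,
    Measure.restrict_apply measurableSet_Iic]
  rcases lt_or_ge b 0 with hb0 | hb0
  · have : cdf μ ⁻¹' Iic b = ∅ :=
      eq_empty_of_forall_notMem fun x hx => (hb0.trans_le (cdf_nonneg μ x)).not_ge hx
    have h' : Iic b ∩ Icc 0 1 = ∅ := by
      ext x; simp only [mem_inter_iff, mem_Iic, mem_Icc]; grind
    rw [this, h', measure_empty, measure_empty]
  rcases le_or_gt b 1 with hb1 | hb1
  · have h' : Iic b ∩ Icc 0 1 = Icc 0 b := by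
      ext x; simp only [mem_inter_iff, mem_Iic, mem_Icc]; grind
    rw [measure_cdf_preimage_Iic μ ⟨hb0, hb1⟩, h', Real.volume_Icc, sub_zero]
  · have : cdf μ ⁻¹' Iic b = univ :=
      eq_univ_of_forall fun x => (cdf_le_one μ x).trans hb1.le
    have h' : Iic b ∩ Icc 0 1 = Icc 0 1 := by
      ext x; simp only [mem_inter_iff, mem_Iic, mem_Icc]; grind
    simp [this, h']

lemma Iic_ae_eq_cdf_preimage_Iic (y : ℝ) : Iic y =ᵐ[μ] cdf μ ⁻¹' Iic (cdf μ y) :=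
  ae_eq_of_subset_of_measure_ge (fun _ hx => monotone_cdf μ hx)
    (by rw [measure_cdf_preimage_Iic μ ⟨cdf_nonneg μ y, cdf_le_one μ y⟩, ofReal_cdf])
    measurableSet_Iic.nullMeasurableSet (measure_ne_top _ _)

lemma setIntegral_Ioi_comp_cdf {g : ℝ → ℝ} (hg : AEStronglyMeasurable g (volume.restrict (Icc 0 1)))
    (y : ℝ) : ∫ r in Ioi y, g (cdf μ r) ∂μ = ∫ u in cdf μ y..1, g u := by
  have hae : Ioi y =ᵐ[μ] cdf μ ⁻¹' Ioi (cdf μ y) := by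
    simpa only [compl_Iic, ← preimage_compl] using (Iic_ae_eq_cdf_preimage_Iic μ y).compl
  have hinter : Ioi (cdf μ y) ∩ Icc 0 1 = Ioc (cdf μ y) 1 := by
    have := cdf_nonneg μ y
    ext x; simp only [mem_inter_iff, mem_Ioi, mem_Icc, mem_Ioc]; grind
  rw [setIntegral_congr_set hae, ← setIntegral_map measurableSet_Ioi (map_cdf μ ▸ hg)
    (continuous_cdf μ).aemeasurable, map_cdf, Measure.restrict_restrict measurableSet_Ioi,
    hinter, intervalIntegral.integral_of_le (cdf_le_one μ y)]

end CDF

section LayerCake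

variable {μ : Measure ℝ} {h : ℝ → ℝ}

lemma integral_Ioi_zero_indicator_Iio {r : ℝ} (hr : 0 ≤ r) (c : ℝ) :
    ∫ y in Ioi 0, (Iio r).indicator (fun _ => c) y = r * c := by
  rw [integral_indicator_const _ measurableSet_Iio, measureReal_restrict_apply measurableSet_Iio,
    Iio_inter_Ioi, Real.volume_real_Ioo_of_le hr, sub_zero, smul_eq_mul]

lemma integrable_indicator_Iio_restrict_Ioi (r c : ℝ) :
    Integrable ((Iio r).indicator fun _ => c) (volume.restrict (Ioi 0)) :=
  (integrable_indicator_iff measurableSet_Iio).2 <| integrableOn_const <| by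
    rw [Measure.restrict_apply measurableSet_Iio, Iio_inter_Ioi]; exact measure_Ioo_lt_top.ne

lemma integrable_uncurry_indicator_Iio (hpos : ∀ᵐ r ∂μ, 0 ≤ r) (hh : AEStronglyMeasurable h μ)
    (hint : Integrable (fun r => r * h r) μ) :
    Integrable (Function.uncurry fun r y => (Iio r).indicator (fun _ => h r) y)
      (μ.prod (volume.restrict (Ioi 0))) := by
  have hmeas : AEStronglyMeasurable (Function.uncurry fun r y => (Iio r).indicator (fun _ => h r) y)
      (μ.prod (volume.restrict (Ioi 0))) :=
    hh.comp_fst.indicator (measurableSet_lt measurable_snd measurable_fst)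
  refine (integrable_prod_iff hmeas).2 ⟨Eventually.of_forall fun r =>
    integrable_indicator_Iio_restrict_Ioi r (h r), hint.norm.congr ?_⟩
  filter_upwards [hpos] with r hr
  simp only [Function.uncurry_apply_pair, norm_indicator_eq_indicator_norm]
  rw [integral_Ioi_zero_indicator_Iio hr, norm_mul, Real.norm_of_nonneg hr]

lemma integrable_setIntegral_Ioi [SFinite μ] (hpos : ∀ᵐ r ∂μ, 0 ≤ r) (hh : AEStronglyMeasurable h μ)
    (hint : Integrable (fun r => r * h r) μ) :
    Integrable (fun y => ∫ r in Ioi y, h r ∂μ) (volume.restrict (Ioi 0)) :=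
  (integrable_uncurry_indicator_Iio hpos hh hint).integral_prod_right.congr
    (ae_of_all _ fun _ => integral_indicator measurableSet_Ioi)

lemma integral_mul_eq_integral_setIntegral_Ioi [SFinite μ] (hpos : ∀ᵐ r ∂μ, 0 ≤ r)
    (hh : AEStronglyMeasurable h μ) (hint : Integrable (fun r => r * h r) μ) :
    ∫ r, r * h r ∂μ = ∫ y in Ioi 0, ∫ r in Ioi y, h r ∂μ := by
  have hslice : ∀ y, ∫ r in Ioi y, h r ∂μ = ∫ r, (Iio r).indicator (fun _ => h r) y ∂μ :=
    fun y => (integral_indicator measurableSet_Ioi).symm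
  simp_rw [hslice]
  rw [← integral_integral_swap (integrable_uncurry_indicator_Iio hpos hh hint)]
  refine integral_congr_ae ?_
  filter_upwards [hpos] with r hr
  exact (integral_Ioi_zero_indicator_Iio hr (h r)).symm

end LayerCake

lemma ae_nonneg_of_measure_Iio_zero {μ : Measure ℝ} (hs : μ (Iio 0) = 0) : ∀ᵐ r ∂μ, 0 ≤ r :=
  (measure_eq_zero_iff_ae_notMem.1 hs).mono fun _ hr => not_lt.1 hr

section Representation

variable (μ : Measure ℝ) [IsProbabilityMeasure μ]

lemma integrable_one_sub_cdf (hs : μ (Iio 0) = 0) (hint : Integrable (fun r : ℝ => r) μ) :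
    Integrable (fun y => 1 - cdf μ y) (volume.restrict (Ioi 0)) := by
  refine (integrable_setIntegral_Ioi (h := fun _ => 1) (ae_nonneg_of_measure_Iio_zero hs)
    aestronglyMeasurable_const (by simpa using hint)).congr (ae_of_all _ fun y => ?_)
  dsimp only
  rw [setIntegral_const, smul_eq_mul, mul_one, ← compl_Iic,
    probReal_compl_eq_one_sub measurableSet_Iic]
  rfl

lemma PhiW_eq_integral_intervalIntegral [NullSingletonClass μ] (hs : μ (Iio 0) = 0)
    (hint : Integrable (fun r : ℝ => r) μ) {W : ℝ → ℝ} (hW : ContinuousOn W (Icc 0 1)) :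
    PhiW W μ = ∫ y in Ioi 0, ∫ u in cdf μ y..1, W u := by
  have hWF : Continuous fun r => W (cdf μ r) :=
    hW.comp_continuous (continuous_cdf μ) fun r => ⟨cdf_nonneg μ r, cdf_le_one μ r⟩
  obtain ⟨C, hC⟩ := isCompact_Icc.exists_bound_of_continuousOn hW
  have hint' : Integrable (fun r => r * W (cdf μ r)) μ :=
    hint.mul_bdd hWF.aestronglyMeasurable
      (ae_of_all _ fun r => hC _ ⟨cdf_nonneg μ r, cdf_le_one μ r⟩)
  rw [PhiW, integral_mul_eq_integral_setIntegral_Ioi (ae_nonneg_of_measure_Iio_zero hs)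
    hWF.aestronglyMeasurable hint']
  exact setIntegral_congr_fun measurableSet_Ioi fun y _ =>
    setIntegral_Ioi_comp_cdf μ (hW.aestronglyMeasurable measurableSet_Icc) y

end Representation

lemma hasDerivAt_integral_intervalIntegral_convexCombination {α : Type*} [MeasurableSpace α]
    {ν : Measure α} {a b : α → ℝ} {g : ℝ → ℝ} {C : ℝ} (hg : Continuous g) (hgC : ∀ u, ‖g u‖ ≤ C)
    (ha : Integrable (fun y => 1 - a y) ν) (hb : Integrable (fun y => 1 - b y) ν) (t : ℝ) :
    HasDerivAt (fun s => ∫ y, (∫ u in (1 - s) * a y + s * b y..1, g u) ∂ν)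
      (∫ y, g ((1 - t) * a y + t * b y) * (a y - b y) ∂ν) t := by
  set m : ℝ → α → ℝ := fun s y => (1 - s) * a y + s * b y
  set G : ℝ → ℝ := fun x => ∫ u in x..1, g u
  have hG : ∀ x, HasDerivAt G (-g x) x := fun x =>
    intervalIntegral.integral_hasDerivAt_left (hg.intervalIntegrable _ _)
      (hg.stronglyMeasurableAtFilter _ _) hg.continuousAt
  have hGcont : Continuous G := continuous_iff_continuousAt.2 fun x => (hG x).continuousAt
  have hGbound : ∀ x, ‖G x‖ ≤ C * ‖1 - x‖ := fun x =>
    intervalIntegral.norm_integral_le_of_norm_le_const fun u _ => hgC u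
  have hm_int : ∀ s, Integrable (fun y => 1 - m s y) ν := fun s =>
    ((ha.const_mul (1 - s)).add (hb.const_mul s)).congr
      (ae_of_all _ fun y => by simp only [m, Pi.add_apply]; ring)
  have hm_meas : ∀ s, AEStronglyMeasurable (m s) ν := fun s =>
    ((aestronglyMeasurable_const (b := (1 : ℝ))).sub (hm_int s).aestronglyMeasurable).congr
      (ae_of_all _ fun y => sub_sub_cancel 1 (m s y))
  have hm_deriv : ∀ s y, HasDerivAt (m · y) (b y - a y) s := fun s y => by
    refine ((((hasDerivAt_id s).const_sub 1).mul_const (a y)).add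
      ((hasDerivAt_id s).mul_const (b y))).congr_deriv ?_
    ring
  have hab : Integrable (fun y => a y - b y) ν :=
    (hb.sub ha).congr (ae_of_all _ fun y => by simp only [Pi.sub_apply]; ring)
  refine (hasDerivAt_integral_of_dominated_loc_of_deriv_le (bound := fun y => C * ‖a y - b y‖)
    (F' := fun s y => g (m s y) * (a y - b y))
    univ_mem (Eventually.of_forall fun s => hGcont.comp_aestronglyMeasurable (hm_meas s))
    ((hm_int t).norm.const_mul C |>.mono' (hGcont.comp_aestronglyMeasurable (hm_meas t))
      (ae_of_all _ fun y => hGbound _))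
    ((hg.comp_aestronglyMeasurable (hm_meas t)).mul hab.aestronglyMeasurable)
    (ae_of_all _ fun y s _ => ?_) (hab.norm.const_mul C)
    (ae_of_all _ fun y s _ => ?_)).2
  · rw [norm_mul]
    exact mul_le_mul_of_nonneg_right (hgC _) (norm_nonneg _)
  · refine ((hG (m s y)).comp s (hm_deriv s y)).congr_deriv ?_
    ring

section Mixture

variable (ρ₁ ρ₂ : Measure ℝ)

lemma mix_apply (s : ℝ) (A : Set ℝ) :
    mix ρ₁ ρ₂ s A = ENNReal.ofReal (1 - s) * ρ₁ A + ENNReal.ofReal s * ρ₂ A := by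
  simp [mix]

instance [NullSingletonClass ρ₁] [NullSingletonClass ρ₂] (s : ℝ) :
    NullSingletonClass (mix ρ₁ ρ₂ s) :=
  ⟨fun x => by simp [mix_apply]⟩

lemma isProbabilityMeasure_mix [IsProbabilityMeasure ρ₁] [IsProbabilityMeasure ρ₂] {s : ℝ}
    (hs : s ∈ Icc 0 1) : IsProbabilityMeasure (mix ρ₁ ρ₂ s) :=
  ⟨by rw [mix_apply, measure_univ, measure_univ, mul_one, mul_one,
    ← ENNReal.ofReal_add (by linarith [hs.2]) hs.1, sub_add_cancel, ENNReal.ofReal_one]⟩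

lemma integrable_mix {f : ℝ → ℝ} (h₁ : Integrable f ρ₁) (h₂ : Integrable f ρ₂) (s : ℝ) :
    Integrable f (mix ρ₁ ρ₂ s) :=
  (h₁.smul_measure ENNReal.ofReal_ne_top).add_measure (h₂.smul_measure ENNReal.ofReal_ne_top)

lemma cdf_mix [IsFiniteMeasure ρ₁] [IsFiniteMeasure ρ₂] {s : ℝ} (hs : s ∈ Icc 0 1) (r : ℝ) :
    cdf (mix ρ₁ ρ₂ s) r = (1 - s) * cdf ρ₁ r + s * cdf ρ₂ r := by
  rw [cdf, mix_apply, ENNReal.toReal_add (by finiteness) (by finiteness), ENNReal.toReal_mul,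
    ENNReal.toReal_mul, ENNReal.toReal_ofReal (by linarith [hs.2]), ENNReal.toReal_ofReal hs.1]
  rfl

variable [IsProbabilityMeasure ρ₁] [IsProbabilityMeasure ρ₂]

lemma convexCombination_cdf_mem_Icc {s : ℝ} (hs : s ∈ Icc 0 1) (r : ℝ) :
    (1 - s) * cdf ρ₁ r + s * cdf ρ₂ r ∈ Icc (0 : ℝ) 1 := by
  have := isProbabilityMeasure_mix ρ₁ ρ₂ hs
  rw [← cdf_mix ρ₁ ρ₂ hs]
  exact ⟨cdf_nonneg _ r, cdf_le_one _ r⟩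

lemma PhiW_mix_eq_integral_intervalIntegral [NullSingletonClass ρ₁] [NullSingletonClass ρ₂]
    (hs₁ : ρ₁ (Iio 0) = 0) (hs₂ : ρ₂ (Iio 0) = 0)
    (hint₁ : Integrable (fun r : ℝ => r) ρ₁) (hint₂ : Integrable (fun r : ℝ => r) ρ₂)
    {W : ℝ → ℝ} (hW : ContinuousOn W (Icc 0 1)) {s : ℝ} (hs : s ∈ Icc 0 1) :
    PhiW W (mix ρ₁ ρ₂ s) = ∫ y in Ioi 0, ∫ u in (1 - s) * cdf ρ₁ y + s * cdf ρ₂ y..1, W u := by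
  have := isProbabilityMeasure_mix ρ₁ ρ₂ hs
  simp_rw [PhiW_eq_integral_intervalIntegral _ (by simp [mix_apply, hs₁, hs₂])
    (integrable_mix ρ₁ ρ₂ hint₁ hint₂ s) hW, cdf_mix ρ₁ ρ₂ hs]

end Mixture

theorem hasDerivAt_PhiW_mixture_general
    (ρ₁ ρ₂ : Measure ℝ) [IsProbabilityMeasure ρ₁] [IsProbabilityMeasure ρ₂]
    [NullSingletonClass ρ₁] [NullSingletonClass ρ₂]
    (hs₁ : ρ₁ (Iio 0) = 0) (hs₂ : ρ₂ (Iio 0) = 0)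
    (hint₁ : Integrable (fun r : ℝ => r) ρ₁) (hint₂ : Integrable (fun r : ℝ => r) ρ₂)
    (W : ℝ → ℝ) (hWcont : ContinuousOn W (Icc 0 1))
    (t : ℝ) (ht : t ∈ Ioo (0 : ℝ) 1) :
    HasDerivAt (fun s : ℝ => PhiW W (mix ρ₁ ρ₂ s))
      (∫ r in Ioi (0 : ℝ),
        W ((1 - t) * cdf ρ₁ r + t * cdf ρ₂ r) * (cdf ρ₁ r - cdf ρ₂ r)) t := by
  -- Extending `W` constantly outside `[0,1]` makes `x ↦ ∫_x^1 W` differentiable at `0` and `1`.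
  set Wc := IccExtend zero_le_one ((Icc 0 1).domRestrict W)
  have hWc : Continuous Wc := hWcont.domRestrict.Icc_extend'
  have hWc_eq : ∀ u ∈ Icc (0 : ℝ) 1, Wc u = W u := fun u hu => IccExtend_of_mem _ _ hu
  obtain ⟨C, hC⟩ := isCompact_Icc.exists_bound_of_continuousOn hWcont
  have hrep : ∀ s ∈ Ioo (0 : ℝ) 1, PhiW W (mix ρ₁ ρ₂ s) =
      ∫ y in Ioi 0, ∫ u in (1 - s) * cdf ρ₁ y + s * cdf ρ₂ y..1, Wc u := fun s hs => by
    have hs' : s ∈ Icc (0 : ℝ) 1 := Ioo_subset_Icc_self hs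
    rw [PhiW_mix_eq_integral_intervalIntegral ρ₁ ρ₂ hs₁ hs₂ hint₁ hint₂ hWcont hs']
    refine setIntegral_congr_fun measurableSet_Ioi fun y _ =>
      intervalIntegral.integral_congr fun u hu => (hWc_eq u ?_).symm
    exact uIcc_subset_Icc (convexCombination_cdf_mem_Icc ρ₁ ρ₂ hs' y) ⟨zero_le_one, le_rfl⟩ hu
  have hderiv := hasDerivAt_integral_intervalIntegral_convexCombination
    hWc (fun u => hC _ (projIcc 0 1 zero_le_one u).2)
    (integrable_one_sub_cdf ρ₁ hs₁ hint₁) (integrable_one_sub_cdf ρ₂ hs₂ hint₂) t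
  refine (hderiv.congr_of_eventuallyEq
    (eventually_of_mem (Ioo_mem_nhds ht.1 ht.2) hrep)).congr_deriv ?_
  refine setIntegral_congr_fun measurableSet_Ioi fun y _ => ?_
  rw [hWc_eq _ (convexCombination_cdf_mem_Icc ρ₁ ρ₂ (Ioo_subset_Icc_self ht) y)]

/-- For non-atomic probability measures `ρ₁, ρ₂` on `[0,∞)` with finite first moments and
`W : [0,1] → [0,∞)` bounded and continuous, at any `t ∈ (0,1)` the map
`t ↦ Φ_W((1-t)ρ₁ + tρ₂)` is differentiable with derivative
`∫_0^∞ W(F_{(1-t)ρ₁+tρ₂}(r)) (F_{ρ₁}(r) - F_{ρ₂}(r)) dr`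
(note `F_{(1-t)ρ₁+tρ₂} = (1-t) F_{ρ₁} + t F_{ρ₂}`). -/
theorem hasDerivAt_PhiW_mixture
    (ρ₁ ρ₂ : Measure ℝ) [IsProbabilityMeasure ρ₁] [IsProbabilityMeasure ρ₂]
    [NullSingletonClass ρ₁] [NullSingletonClass ρ₂]
    (hs₁ : ρ₁ (Iio 0) = 0) (hs₂ : ρ₂ (Iio 0) = 0)
    (hint₁ : Integrable (fun r : ℝ => r) ρ₁) (hint₂ : Integrable (fun r : ℝ => r) ρ₂)
    (W : ℝ → ℝ) (hWcont : ContinuousOn W (Icc 0 1)) (hWnn : ∀ t ∈ Icc (0 : ℝ) 1, 0 ≤ W t)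
    (B : ℝ) (hWbd : ∀ t ∈ Icc (0 : ℝ) 1, W t ≤ B)
    (t : ℝ) (ht : t ∈ Ioo (0 : ℝ) 1) :
    HasDerivAt (fun s : ℝ => PhiW W (mix ρ₁ ρ₂ s))
      (∫ r in Ioi (0 : ℝ),
        W ((1 - t) * cdf ρ₁ r + t * cdf ρ₂ r) * (cdf ρ₁ r - cdf ρ₂ r)) t :=
  hasDerivAt_PhiW_mixture_general ρ₁ ρ₂ hs₁ hs₂ hint₁ hint₂ W hWcont t ht
end

section
/- Let ζ ∈ (0,1), let W = ζ^{-1} 1_{[0,ζ]} be the hard-threshold weight, and let ρ be a non-atomic Borel probability measure on [0,∞) with finite first moment such that q = F_ρ^{-1}(ζ) is the unique point with F_ρ(q) = ζ. Then for every R ≥ 0 the quantity ζ^{-1} ∫_0^q ( F_ρ(r) − 1_{[R,∞)}(r) ) dr (the influence function of Φ_W at ρ in direction R) equals ζ^{-1}( R + (ζ−1) q ) − Φ_W(ρ) if 0 ≤ R ≤ q, and equals q − Φ_W(ρ) if R > q; in both cases it is at most q − Φ_W(ρ). -/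
open MeasureTheory Set

/-- The quantile function `F_ρ⁻¹(ζ) = inf { r ≥ 0 : F_ρ(r) ≥ ζ }`. -/
noncomputable def quant (ρ : Measure ℝ) (ζ : ℝ) : ℝ := sInf {r : ℝ | 0 ≤ r ∧ ζ ≤ cdf ρ r}

/-- The hard-threshold weight `W = ζ⁻¹ 1_{[0,ζ]}`. -/
noncomputable def hardW (ζ : ℝ) : ℝ → ℝ := fun t => if t ≤ ζ then ζ⁻¹ else 0

open scoped ENNReal

/-! By Tonelli, `∫₀^q F_ρ(r) dr = ∫_{t ≤ q} (q - t) dρ(t) = q F_ρ(q) - ∫_{t ≤ q} t dρ(t)`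
as soon as `ρ` lives on `[0, ∞)`. Uniqueness of the `ζ`-quantile makes `{F_ρ ≤ ζ} = (-∞, q]`,
so `Φ_W(ρ) = ζ⁻¹ ∫_{t ≤ q} t dρ(t)`, and `∫₀^q 1_{[R,∞)} = (q - R)⁺`. Hence the influence
function is `q - ζ⁻¹ (q - R)⁺ - Φ_W(ρ)`, from which all three claims are read off. -/

lemma lintegral_measure_Iic_eq_lintegral_volume (ρ : Measure ℝ) [SFinite ρ] (s : Set ℝ) :
    ∫⁻ r in s, ρ (Iic r) = ∫⁻ t, volume (Ici t ∩ s) ∂ρ := by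
  have hmeas : Measurable ({p : ℝ × ℝ | p.2 ≤ p.1}.indicator (1 : ℝ × ℝ → ℝ≥0∞)) :=
    measurable_one.indicator (measurableSet_le measurable_snd measurable_fst)
  have hρ (r : ℝ) : ρ (Iic r) = ∫⁻ t, {p : ℝ × ℝ | p.2 ≤ p.1}.indicator 1 (r, t) ∂ρ := by
    rw [← lintegral_indicator_one measurableSet_Iic]; rfl
  have hvol (t : ℝ) :
      volume (Ici t ∩ s) = ∫⁻ r in s, {p : ℝ × ℝ | p.2 ≤ p.1}.indicator 1 (r, t) := by
    rw [← Measure.restrict_apply measurableSet_Ici, ← lintegral_indicator_one measurableSet_Ici]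
    rfl
  simp_rw [hρ, hvol]
  exact lintegral_lintegral_swap hmeas.aemeasurable

lemma volume_Ioc_inter_Ici {a b c : ℝ} (hac : a ≤ c) :
    volume (Ioc a b ∩ Ici c) = ENNReal.ofReal (b - c) := by
  rw [← measure_congr ((ae_eq_refl (Ioc a b)).inter (Ioi_ae_eq_Ici (μ := volume) (a := c))),
    Ioc_inter_Ioi, max_eq_right hac, Real.volume_Ioc]

lemma monotone_cdf_s4 (ρ : Measure ℝ) [IsFiniteMeasure ρ] : Monotone (cdf ρ) := fun _ _ h =>
  ENNReal.toReal_mono (measure_ne_top ρ _) (measure_mono (Iic_subset_Iic.2 h))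

lemma integrableOn_Iic_of_measure_Iio_eq_zero {ρ : Measure ℝ} [IsFiniteMeasure ρ] {a : ℝ}
    (ha : ρ (Iio a) = 0) {f : ℝ → ℝ} (hf : Continuous f) (b : ℝ) : IntegrableOn f (Iic b) ρ := by
  have hIio : IntegrableOn f (Iio a) ρ := by
    rw [IntegrableOn, Measure.restrict_eq_zero.2 ha]; exact integrable_zero_measure
  refine (hIio.union (hf.integrableOn_Icc (a := a) (b := b))).mono_set fun t ht => ?_
  rcases lt_or_ge t a with h | h
  exacts [Or.inl h, Or.inr ⟨h, ht⟩]

theorem intervalIntegral_cdf_eq {ρ : Measure ℝ} [IsFiniteMeasure ρ] {a b : ℝ} (hab : a ≤ b)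
    (ha : ρ (Iio a) = 0) : ∫ r in a..b, cdf ρ r = b * cdf ρ b - ∫ t in Iic b, t ∂ρ := by
  have hae : ∀ᵐ t ∂ρ, a ≤ t := ae_iff.2 (by simp only [not_le]; exact ha)
  have hvol : ∀ᵐ t ∂ρ, volume (Ici t ∩ Ioc a b) = ENNReal.ofReal (b - t) := by
    filter_upwards [hae] with t ht
    rw [inter_comm, volume_Ioc_inter_Ici ht]
  have hL : ENNReal.ofReal (∫ r in Ioc a b, cdf ρ r) = ∫⁻ r in Ioc a b, ρ (Iic r) := by
    rw [ofReal_integral_eq_lintegral_ofReal (monotone_cdf_s4 ρ).intervalIntegrable.1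
      (.of_forall fun _ => ENNReal.toReal_nonneg)]
    simp only [cdf, ENNReal.ofReal_toReal (measure_ne_top ρ _)]
  have hR : ENNReal.ofReal (∫ t in Iic b, (b - t) ∂ρ) =
      ∫⁻ t in Iic b, ENNReal.ofReal (b - t) ∂ρ :=
    ofReal_integral_eq_lintegral_ofReal
      (integrableOn_Iic_of_measure_Iio_eq_zero ha (by fun_prop) b)
      ((ae_restrict_mem measurableSet_Iic).mono fun _ ht => sub_nonneg.2 ht)
  have hcdf : ∫ r in Ioc a b, cdf ρ r = ∫ t in Iic b, (b - t) ∂ρ := by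
    refine (ENNReal.ofReal_eq_ofReal_iff
      (setIntegral_nonneg measurableSet_Ioc fun _ _ => ENNReal.toReal_nonneg)
      (setIntegral_nonneg measurableSet_Iic fun _ ht => sub_nonneg.2 ht)).1 ?_
    calc ENNReal.ofReal (∫ r in Ioc a b, cdf ρ r)
        = ∫⁻ t, volume (Ici t ∩ Ioc a b) ∂ρ :=
          hL.trans (lintegral_measure_Iic_eq_lintegral_volume ρ _)
      _ = ∫⁻ t, ENNReal.ofReal (b - t) ∂ρ := lintegral_congr_ae hvol
      _ = ENNReal.ofReal (∫ t in Iic b, (b - t) ∂ρ) := by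
        rw [hR]
        refine (setLIntegral_eq_of_support_subset fun t ht => ?_).symm
        by_contra h
        exact ht (ENNReal.ofReal_eq_zero.2 (sub_nonpos.2 (not_le.1 h).le))
  rw [intervalIntegral.integral_of_le hab, hcdf,
    integral_sub (integrable_const b)
      (integrableOn_Iic_of_measure_Iio_eq_zero ha continuous_id' b),
    setIntegral_const, smul_eq_mul, mul_comm, measureReal_def, cdf]

lemma le_of_cdf_pos {ρ : Measure ℝ} {a x : ℝ} (ha : ρ (Iio a) = 0) (hx : 0 < cdf ρ x) :
    a ≤ x := by
  by_contra! h
  have : ρ (Iic x) = 0 := measure_mono_null (Iic_subset_Iio.2 h) ha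
  simp [cdf, this] at hx

lemma cdf_le_iff_le_of_cdf_eq_unique {ρ : Measure ℝ} [IsFiniteMeasure ρ] {ζ q : ℝ}
    (hq : cdf ρ q = ζ) (huniq : ∀ r, cdf ρ r = ζ → r = q) (r : ℝ) : cdf ρ r ≤ ζ ↔ r ≤ q := by
  refine ⟨fun h => ?_, fun h => hq ▸ monotone_cdf_s4 ρ h⟩
  by_contra! hqr
  exact hqr.ne' (huniq r (le_antisymm h (hq ▸ monotone_cdf_s4 ρ hqr.le)))

lemma PhiW_hardW_eq {ρ : Measure ℝ} {ζ q : ℝ} (h : ∀ r, cdf ρ r ≤ ζ ↔ r ≤ q) :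
    PhiW (hardW ζ) ρ = ζ⁻¹ * ∫ t in Iic q, t ∂ρ := by
  have hW : (fun r => r * hardW ζ (cdf ρ r)) = (Iic q).indicator (fun r => ζ⁻¹ * r) := by
    ext r
    simp only [hardW, h, indicator_apply, mem_Iic]
    split_ifs <;> ring
  rw [PhiW, hW, integral_indicator measurableSet_Iic, integral_const_mul]

lemma intervalIntegral_indicator_Ici_one {a b R : ℝ} (hab : a ≤ b) (haR : a ≤ R) :
    ∫ r in a..b, (Ici R).indicator (fun _ => (1 : ℝ)) r = max (b - R) 0 := by
  rw [intervalIntegral.integral_of_le hab, setIntegral_indicator measurableSet_Ici,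
    setIntegral_const, smul_eq_mul, mul_one, measureReal_def, volume_Ioc_inter_Ici haR,
    ENNReal.toReal_ofReal']

theorem influence_of_hard_threshold_general
    (ρ : Measure ℝ) [IsProbabilityMeasure ρ]
    (hsupp : ρ (Iio 0) = 0)
    (ζ : ℝ) (hζ : ζ ∈ Ioo (0 : ℝ) 1)
    (q : ℝ) (hqcdf : cdf ρ q = ζ)
    (huniq : ∀ r : ℝ, cdf ρ r = ζ → r = q)
    (R : ℝ) (hR : 0 ≤ R) :
    (R ≤ q →
      ζ⁻¹ * ∫ r in (0 : ℝ)..q, (cdf ρ r - indicator (Ici R) (fun _ => (1 : ℝ)) r) =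
        ζ⁻¹ * (R + (ζ - 1) * q) - PhiW (hardW ζ) ρ) ∧
    (q < R →
      ζ⁻¹ * ∫ r in (0 : ℝ)..q, (cdf ρ r - indicator (Ici R) (fun _ => (1 : ℝ)) r) =
        q - PhiW (hardW ζ) ρ) ∧
    ζ⁻¹ * ∫ r in (0 : ℝ)..q, (cdf ρ r - indicator (Ici R) (fun _ => (1 : ℝ)) r) ≤
      q - PhiW (hardW ζ) ρ := by
  obtain ⟨hζ0, -⟩ := hζ
  have hq0 : 0 ≤ q := le_of_cdf_pos hsupp (hqcdf ▸ hζ0)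
  have hindicator : IntervalIntegrable ((Ici R).indicator fun _ => (1 : ℝ)) volume 0 q :=
    ⟨intervalIntegrable_const.1.indicator measurableSet_Ici,
      intervalIntegrable_const.2.indicator measurableSet_Ici⟩
  have hinfluence :
      ζ⁻¹ * ∫ r in (0 : ℝ)..q, (cdf ρ r - indicator (Ici R) (fun _ => (1 : ℝ)) r) =
        q - ζ⁻¹ * max (q - R) 0 - PhiW (hardW ζ) ρ := by
    rw [intervalIntegral.integral_sub (monotone_cdf_s4 ρ).intervalIntegrable hindicator,
      intervalIntegral_cdf_eq hq0 hsupp, intervalIntegral_indicator_Ici_one hq0 hR, hqcdf,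
      PhiW_hardW_eq (cdf_le_iff_le_of_cdf_eq_unique hqcdf huniq)]
    field_simp
    ring
  refine ⟨fun hRq => ?_, fun hqR => ?_, ?_⟩ <;> rw [hinfluence]
  · rw [max_eq_left (sub_nonneg.2 hRq)]
    field_simp
    ring
  · simp [max_eq_right (sub_nonpos.2 hqR.le)]
  · have := mul_nonneg (inv_nonneg.2 hζ0.le) (le_max_right (q - R) 0)
    linarith

/-- For the hard-threshold weight `W = ζ⁻¹ 1_{[0,ζ]}` and a non-atomic probability measure `ρ`
on `[0,∞)` with finite first moment whose quantile `q = F_ρ⁻¹(ζ)` is the unique point with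
`F_ρ(q) = ζ`, the influence function `ζ⁻¹ ∫_0^q (F_ρ(r) - 1_{[R,∞)}(r)) dr` of `Φ_W` at `ρ` in
direction `R ≥ 0` equals `ζ⁻¹(R + (ζ-1)q) - Φ_W(ρ)` when `0 ≤ R ≤ q` and `q - Φ_W(ρ)` when
`R > q`; in both cases it is at most `q - Φ_W(ρ)`. -/
theorem influence_of_hard_threshold
    (ρ : Measure ℝ) [IsProbabilityMeasure ρ] [NullSingletonClass ρ]
    (hsupp : ρ (Iio 0) = 0) (hint : Integrable (fun r : ℝ => r) ρ)
    (ζ : ℝ) (hζ : ζ ∈ Ioo (0 : ℝ) 1)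
    (q : ℝ) (hq : q = quant ρ ζ) (hqcdf : cdf ρ q = ζ)
    (huniq : ∀ r : ℝ, cdf ρ r = ζ → r = q)
    (R : ℝ) (hR : 0 ≤ R) :
    (R ≤ q →
      ζ⁻¹ * ∫ r in (0 : ℝ)..q, (cdf ρ r - indicator (Ici R) (fun _ => (1 : ℝ)) r) =
        ζ⁻¹ * (R + (ζ - 1) * q) - PhiW (hardW ζ) ρ) ∧
    (q < R →
      ζ⁻¹ * ∫ r in (0 : ℝ)..q, (cdf ρ r - indicator (Ici R) (fun _ => (1 : ℝ)) r) =
        q - PhiW (hardW ζ) ρ) ∧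
    ζ⁻¹ * ∫ r in (0 : ℝ)..q, (cdf ρ r - indicator (Ici R) (fun _ => (1 : ℝ)) r) ≤
      q - PhiW (hardW ζ) ρ :=
  influence_of_hard_threshold_general ρ hsupp ζ hζ q hqcdf huniq R hR
end
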